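/- arXiv:1810.00263 — 2 statements merged into one kernel-verified Lean document; each statement's English description precedes it below -/
import Mathlib

section
/- For z > 0, the integral ∫_0^∞ e^{-y²} sin(yz)/y dy equals (π/2) erf(z/2). -/
/-!
Writing `F b z = ∫_0^∞ e^{-b y²} sin(yz)/y dy`, differentiation under the integral sign (dominated
by `e^{-b y²}`) gives `∂F/∂z = ∫_0^∞ e^{-b y²} cos(yz) dy`, half the real part of the Fourier
transform of the Gaussian, i.e. `√(π/b)/2 · e^{-z²/(4b)}`. Since `F b 0 = 0`, integrating from `0`
to `z` and substituting `t = 2√b s` turns this into `(π/2) erf(z/(2√b))`.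
-/

noncomputable def erf (x : ℝ) : ℝ :=
  (2 / Real.sqrt Real.pi) * ∫ t in (0:ℝ)..x, Real.exp (-t ^ 2)

open MeasureTheory Real Set

theorem integral_exp_neg_mul_sq_mul_cos {b : ℝ} (hb : 0 < b) (t : ℝ) :
    ∫ x : ℝ, exp (-b * x ^ 2) * cos (x * t) = √(π / b) * exp (-t ^ 2 / (4 * b)) := by
  have hb' : 0 < (b : ℂ).re := by simpa using hb
  have hre (x : ℝ) : (Complex.exp (Complex.I * t * x) * Complex.exp (-b * x ^ 2)).re =
      exp (-b * x ^ 2) * cos (x * t) := by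
    rw [mul_comm, show Complex.I * t * x = ((x * t : ℝ) : ℂ) * Complex.I by push_cast; ring,
      show -(b : ℂ) * x ^ 2 = ((-b * x ^ 2 : ℝ) : ℂ) by push_cast; ring, ← Complex.ofReal_exp,
      Complex.re_ofReal_mul, Complex.exp_ofReal_mul_I_re]
  have hint : Integrable fun x : ℝ => Complex.exp (Complex.I * t * x) * Complex.exp (-b * x ^ 2) :=
    (integrable_cexp_quadratic hb' (Complex.I * t) 0).congr <| .of_forall fun x => by
      simp only [add_zero, ← Complex.exp_add]; ring_nf
  have hfourier := congrArg Complex.re (fourierIntegral_gaussian hb' t)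
  rw [← RCLike.re_to_complex, ← integral_re hint] at hfourier
  simp only [RCLike.re_to_complex, hre] at hfourier
  rw [hfourier, show (1 / 2 : ℂ) = ((1 / 2 : ℝ) : ℂ) by norm_num, ← Complex.ofReal_div,
    ← Complex.ofReal_cpow (by positivity), ← sqrt_eq_rpow,
    show -(t : ℂ) ^ 2 / (4 * b) = ((-t ^ 2 / (4 * b) : ℝ) : ℂ) by push_cast; ring,
    ← Complex.ofReal_exp, ← Complex.ofReal_mul, Complex.ofReal_re]

theorem integral_Ioi_exp_neg_mul_sq_mul_cos {b : ℝ} (hb : 0 < b) (t : ℝ) :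
    ∫ y in Ioi 0, exp (-b * y ^ 2) * cos (y * t) = √(π / b) / 2 * exp (-t ^ 2 / (4 * b)) := by
  have hcos (y : ℝ) : cos (|y| * t) = cos (y * t) := by
    rcases abs_choice y with h | h <;> simp [h]
  have heven := integral_comp_abs (f := fun y => exp (-b * y ^ 2) * cos (y * t))
  simp only [sq_abs, hcos, integral_exp_neg_mul_sq_mul_cos hb] at heven
  linarith

theorem hasDerivAt_sin_mul_div {y : ℝ} (hy : y ≠ 0) (x : ℝ) :
    HasDerivAt (fun x => sin (y * x) / y) (cos (y * x)) x := by
  simpa [hy] using (((hasDerivAt_id x).const_mul y).sin).div_const y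

theorem norm_exp_neg_mul_sq_mul_sin_div_le (b x y : ℝ) :
    ‖exp (-b * y ^ 2) * sin (y * x) / y‖ ≤ |x| * exp (-b * y ^ 2) := by
  rw [mul_div_assoc, norm_mul, norm_of_nonneg (exp_pos _).le, mul_comm]
  gcongr
  rw [norm_div, norm_eq_abs, norm_eq_abs]
  refine div_le_of_le_mul₀ (abs_nonneg _) (abs_nonneg _) ?_
  simpa [abs_mul, mul_comm] using abs_sin_le_abs (x := y * x)

theorem hasDerivAt_integral_Ioi_exp_neg_mul_sq_mul_sin_div {b : ℝ} (hb : 0 < b) (z : ℝ) :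
    HasDerivAt (fun z => ∫ y in Ioi 0, exp (-b * y ^ 2) * sin (y * z) / y)
      (√(π / b) / 2 * exp (-z ^ 2 / (4 * b))) z := by
  have hg : IntegrableOn (fun y => exp (-b * y ^ 2)) (Ioi 0) :=
    (integrable_exp_neg_mul_sq hb).integrableOn
  have hmeas (x : ℝ) : AEStronglyMeasurable (fun y => exp (-b * y ^ 2) * sin (y * x) / y)
      (volume.restrict (Ioi 0)) :=
    (ContinuousOn.div (by fun_prop) continuousOn_id fun y hy => ne_of_gt hy).aestronglyMeasurable
      measurableSet_Ioi
  have hint : IntegrableOn (fun y => exp (-b * y ^ 2) * sin (y * z) / y) (Ioi 0) :=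
    (hg.const_mul |z|).mono' (hmeas z)
      (.of_forall fun y => norm_exp_neg_mul_sq_mul_sin_div_le b z y)
  have hderiv := hasDerivAt_integral_of_dominated_loc_of_deriv_le (x₀ := z)
    (F' := fun x y => exp (-b * y ^ 2) * cos (y * x)) Filter.univ_mem
    (.of_forall hmeas) hint (by fun_prop) ?_ hg ?_
  · rw [← integral_Ioi_exp_neg_mul_sq_mul_cos hb]
    exact hderiv.2
  · refine .of_forall fun y x _ => ?_
    rw [norm_mul, norm_of_nonneg (exp_pos _).le]
    exact mul_le_of_le_one_right (exp_pos _).le (abs_cos_le_one _)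
  · rw [ae_restrict_iff' measurableSet_Ioi]
    refine .of_forall fun y (hy : 0 < y) x _ => ?_
    simpa only [mul_div_assoc] using (hasDerivAt_sin_mul_div hy.ne' x).const_mul (exp (-b * y ^ 2))

theorem intervalIntegral_exp_neg_div_sq {c : ℝ} (hc : c ≠ 0) (z : ℝ) :
    ∫ t in (0 : ℝ)..z, exp (-(t / c) ^ 2) = c * √π / 2 * erf (z / c) := by
  have hπ : √π ≠ 0 := (sqrt_pos.2 pi_pos).ne'
  rw [intervalIntegral.integral_comp_div (fun t => exp (-t ^ 2)) hc, zero_div, smul_eq_mul, erf]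
  field_simp

theorem integral_Ioi_exp_neg_mul_sq_mul_sin_div {b : ℝ} (hb : 0 < b) (z : ℝ) :
    ∫ y in Ioi 0, exp (-b * y ^ 2) * sin (y * z) / y = π / 2 * erf (z / (2 * √b)) := by
  have hFTC := intervalIntegral.integral_eq_sub_of_hasDerivAt (a := 0) (b := z)
    (fun x _ => hasDerivAt_integral_Ioi_exp_neg_mul_sq_mul_sin_div hb x)
    (by apply Continuous.intervalIntegrable; fun_prop)
  have hsq (t : ℝ) : -t ^ 2 / (4 * b) = -(t / (2 * √b)) ^ 2 := by
    rw [div_pow, mul_pow, sq_sqrt hb.le]; ring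
  have hc : 2 * √b ≠ 0 := by positivity
  simp only [mul_zero, sin_zero, zero_div, integral_zero, sub_zero, hsq,
    intervalIntegral.integral_const_mul, intervalIntegral_exp_neg_div_sq hc] at hFTC
  rw [← hFTC, sqrt_div' _ hb.le]
  field_simp
  rw [sq_sqrt pi_pos.le]
  ring

theorem integral_exp_sq_sin_div_general (z : ℝ) :
    ∫ y in Set.Ioi (0:ℝ), Real.exp (-y ^ 2) * Real.sin (y * z) / y =
      (Real.pi / 2) * erf (z / 2) := by
  simpa using integral_Ioi_exp_neg_mul_sq_mul_sin_div one_pos z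

/-- `∫_0^∞ e^{-y²} sin(yz)/y dy = (π/2) erf(z/2)` for `z > 0`. -/
theorem integral_exp_sq_sin_div (z : ℝ) (hz : 0 < z) :
    ∫ y in Set.Ioi (0:ℝ), Real.exp (-y ^ 2) * Real.sin (y * z) / y =
      (Real.pi / 2) * erf (z / 2) :=
  integral_exp_sq_sin_div_general z
end

section
/- For a < 0 and z > 0, the kernel K(a,z,r) = e^{-cos(πa) z r^{-a} - r} sin(sin(πa) z r^{-a})/r is integrable on (0,∞), i.e., ∫_0^∞ |K(a,z,r)| dr < ∞. -/
/-!
Write `K(a,z,r) = exp (c r^p - r) sin (s r^p) / r` with `p = -a ∈ (0,1)`. On `(0,1]` the exponential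
is bounded and `|sin (s r^p)| ≤ |s| r^p`, so `|K| ≲ r^(p-1)`, integrable since `p > 0`. On `[1,∞)`,
`p < 1` gives `c r^p ≤ r/2` eventually, so `|K| ≤ exp (-r/2)`.
-/

open MeasureTheory Filter Set Real Asymptotics Topology

/-- `K(a,z,r) = expSinKernel (-cos (π a) * z) (sin (π a) * z) (-a) r`. -/
noncomputable def expSinKernel (c s p r : ℝ) : ℝ :=
  exp (c * r ^ p - r) * sin (s * r ^ p) / r

section

variable {c s p : ℝ}

theorem continuousOn_expSinKernel : ContinuousOn (expSinKernel c s p) (Ioi 0) := by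
  intro r hr
  have hr0 : r ≠ 0 := ne_of_gt hr
  apply ContinuousAt.continuousWithinAt
  unfold expSinKernel
  fun_prop (disch := simp [hr0])

theorem abs_expSinKernel_le_of_mem_Ioc (hp : 0 ≤ p) {r : ℝ} (hr : r ∈ Ioc 0 1) :
    |expSinKernel c s p r| ≤ exp |c| * |s| * r ^ (p - 1) := by
  obtain ⟨hr0, hr1⟩ := hr
  have hrp : 0 ≤ r ^ p := rpow_nonneg hr0.le p
  have hexp : c * r ^ p - r ≤ |c| := by
    nlinarith [le_abs_self c, rpow_le_one hr0.le hr1 hp, abs_nonneg c]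
  have hsin : |sin (s * r ^ p)| ≤ |s| * r ^ p := by
    simpa only [abs_mul, abs_of_nonneg hrp] using abs_sin_le_abs (x := s * r ^ p)
  calc |expSinKernel c s p r| = exp (c * r ^ p - r) * |sin (s * r ^ p)| / r := by
        rw [expSinKernel, abs_div, abs_mul, abs_exp, abs_of_pos hr0]
    _ ≤ exp |c| * (|s| * r ^ p) / r := by gcongr
    _ = exp |c| * |s| * r ^ (p - 1) := by rw [rpow_sub_one hr0.ne']; ring

theorem integrableOn_expSinKernel_Ioc (hp : 0 < p) :
    IntegrableOn (expSinKernel c s p) (Ioc 0 1) := by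
  have hdom : IntegrableOn (fun r : ℝ => exp |c| * |s| * r ^ (p - 1)) (Ioc 0 1) :=
    ((intervalIntegrable_iff_integrableOn_Ioc_of_le zero_le_one).1
      (intervalIntegral.intervalIntegrable_rpow' (by linarith))).const_mul _
  refine hdom.mono' ?_ ?_
  · exact (continuousOn_expSinKernel.mono Ioc_subset_Ioi_self).aestronglyMeasurable
      measurableSet_Ioc
  · filter_upwards [ae_restrict_mem measurableSet_Ioc] with r hr
    exact abs_expSinKernel_le_of_mem_Ioc hp.le hr

theorem eventually_mul_rpow_le_half (hp : p < 1) : ∀ᶠ r : ℝ in atTop, c * r ^ p ≤ r / 2 := by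
  have hlim : Tendsto (fun r : ℝ => c * r ^ (p - 1)) atTop (𝓝 0) := by
    simpa using (tendsto_rpow_neg_atTop (y := 1 - p) (by linarith)).const_mul c
  filter_upwards [hlim.eventually_le_const (by norm_num : (0 : ℝ) < 1 / 2),
    eventually_gt_atTop 0] with r hr hr0
  rw [rpow_sub_one hr0.ne', ← mul_div_assoc, div_le_iff₀ hr0] at hr
  linarith

theorem expSinKernel_isBigO_exp_neg (hp : p < 1) :
    expSinKernel c s p =O[atTop] fun r => exp (-(1 / 2) * r) := by
  refine IsBigO.of_bound' ?_
  filter_upwards [eventually_mul_rpow_le_half (c := c) hp, eventually_ge_atTop 1] with r hr hr1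
  have hr0 : 0 < r := one_pos.trans_le hr1
  calc ‖expSinKernel c s p r‖ = exp (c * r ^ p - r) * |sin (s * r ^ p)| / r := by
        rw [norm_eq_abs, expSinKernel, abs_div, abs_mul, abs_exp, abs_of_pos hr0]
    _ ≤ exp (-(1 / 2) * r) * 1 / 1 := by
        gcongr
        exacts [by linarith, abs_sin_le_one _]
    _ = ‖exp (-(1 / 2) * r)‖ := by rw [norm_eq_abs, abs_exp, mul_one, div_one]

theorem integrableOn_expSinKernel (hp₀ : 0 < p) (hp₁ : p < 1) :
    IntegrableOn (expSinKernel c s p) (Ioi 0) := by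
  have hIoi : IntegrableOn (expSinKernel c s p) (Ioi 1) :=
    integrable_of_isBigO_exp_neg (by norm_num)
      (continuousOn_expSinKernel.mono fun _ hr => mem_Ioi.2 (one_pos.trans_le hr))
      (expSinKernel_isBigO_exp_neg hp₁)
  rw [← Ioc_union_Ioi_eq_Ioi zero_le_one]
  exact (integrableOn_expSinKernel_Ioc hp₀).union hIoi

end

theorem kernel_integrable_general (a z : ℝ) (ha₁ : -1 < a) (ha₂ : a < 0) :
    IntegrableOn
      (fun r : ℝ =>
        Real.exp (-(Real.cos (Real.pi * a)) * z * r ^ (-a) - r) *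
          Real.sin (Real.sin (Real.pi * a) * z * r ^ (-a)) / r)
      (Set.Ioi 0) :=
  integrableOn_expSinKernel (c := -Real.cos (Real.pi * a) * z) (s := Real.sin (Real.pi * a) * z)
    (by linarith) (by linarith)

/-- For `-1 < a < 0` and `z > 0`, the kernel
`K(a,z,r) = e^{-cos(πa) z r^{-a} - r} sin(sin(πa) z r^{-a}) / r`
is (absolutely) integrable on `(0,∞)`. -/
theorem kernel_integrable (a z : ℝ) (ha₁ : -1 < a) (ha₂ : a < 0) (hz : 0 < z) :
    IntegrableOn
      (fun r : ℝ =>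
        Real.exp (-(Real.cos (Real.pi * a)) * z * r ^ (-a) - r) *
          Real.sin (Real.sin (Real.pi * a) * z * r ^ (-a)) / r)
      (Set.Ioi 0) :=
  kernel_integrable_general a z ha₁ ha₂
end
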